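/- arXiv:2005.07275 — 2 statements merged into one kernel-verified Lean document; each statement's English description precedes it below -/
import Mathlib

section
/- With Gaussian measure ν = N(μ, Σ), Σ = LLᵀ a Cholesky factorization, the functions g₁(x) = exp(-L⁻¹(x−μ)) (componentwise) and g₂(x) = exp(-√((1/2)DᵀD)·vech(L⁻¹(x−μ)(x−μ)ᵀL⁻ᵀ)) (componentwise) form an orthonormal basis of the indefinite-Gaussian subspace G under the Bayes-space inner product: ⟨g, g⟩ = Identity. -/
open MeasureTheory Real Matrix

noncomputable section

/-- The Bayes-space inner product `⟨p₁,p₂⟩ = E_ν[ln p₁ ln p₂] − E_ν[ln p₁]E_ν[ln p₂]`. -/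
def bip {X : Type*} [MeasurableSpace X] (ν : Measure X) (p q : X → ℝ) : ℝ :=
  (∫ x, Real.log (p x) * Real.log (q x) ∂ν) -
    (∫ x, Real.log (p x) ∂ν) * (∫ x, Real.log (q x) ∂ν)

/-- The Gaussian measure `N(μ, Σ)` on `ℝᴺ`, given by its density w.r.t. Lebesgue measure. -/
def gaussPi (N : ℕ) (μ : Fin N → ℝ) (S : Matrix (Fin N) (Fin N) ℝ) : Measure (Fin N → ℝ) :=
  volume.withDensity fun x => ENNReal.ofReal
    ((Real.sqrt ((2 * π) ^ N * S.det))⁻¹ *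
      Real.exp (-(1 / 2) * ((x - μ) ⬝ᵥ S⁻¹.mulVec (x - μ))))

/-- First block of the orthonormal indefinite-Gaussian basis:
`g₁ᵢ(x) = exp (-(L⁻¹(x−μ))ᵢ)`. -/
def gOne (N : ℕ) (μ : Fin N → ℝ) (L : Matrix (Fin N) (Fin N) ℝ) (i : Fin N) :
    (Fin N → ℝ) → ℝ :=
  fun x => Real.exp (-(L⁻¹.mulVec (x - μ)) i)

/-- Second block of the orthonormal indefinite-Gaussian basis:
`g₂ₖ(x) = exp (-(√((1/2)DᵀD)·vech (L⁻¹(x−μ)(x−μ)ᵀL⁻ᵀ))ₖ)`, where `R = √((1/2)DᵀD)` and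
`vech` is the half-vectorization. -/
def gTwo (N M : ℕ) (μ : Fin N → ℝ) (L : Matrix (Fin N) (Fin N) ℝ)
    (vech : Matrix (Fin N) (Fin N) ℝ → Fin M → ℝ) (R : Matrix (Fin M) (Fin M) ℝ)
    (k : Fin M) : (Fin N → ℝ) → ℝ :=
  fun x => Real.exp (-(R.mulVec (vech (L⁻¹ * vecMulVec (x - μ) (x - μ) * (L⁻¹)ᵀ))) k)

/-! Writing `ξ = L⁻¹(x - μ)`, the Gaussian `N(μ, LLᵀ)` becomes the standard Gaussian on `ℝᴺ` and
the Bayes inner product becomes a covariance. The logarithms of the basis functions are `-ξᵢ` and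
`-½ ξᵀBₖξ`, where `Bₖ` is the `k`-th row of `B = R⁻¹Dᵀ` read as an `N × N` matrix, because
`R vech(ξξᵀ) = R⁻¹(R²) vech(ξξᵀ) = ½ R⁻¹Dᵀ vec(ξξᵀ)`. Gaussian integration by parts on monomials,
`E[ξᵢ F] = E[∂ᵢF]`, gives `Cov(ξᵢ, ξⱼ) = δᵢⱼ`, kills all odd moments, and gives
`Cov(ξᵀAξ, ξᵀCξ) = 2 tr(AC)` for symmetric `A`, `C`. The dimension count `M = N(N+1)/2` makes `D`
injective with swap-symmetric columns; hence `R` is invertible, each `Bₖ` is symmetric and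
`BBᵀ = R⁻¹DᵀDR⁻¹ = 2I`, so `Cov(½ ξᵀBₖξ, ½ ξᵀBₗξ) = ½ (BBᵀ)ₖₗ = δₖₗ`. -/

open ProbabilityTheory
open scoped NNReal ENNReal

lemma integrable_exp_neg_sq_div_two_mul_pow (k : ℕ) :
    Integrable fun t : ℝ => exp (-t ^ 2 / 2) * t ^ k := by
  have := integrable_rpow_mul_exp_neg_mul_sq (b := 2⁻¹) (by norm_num) (s := k)
    (by linarith [(Nat.cast_nonneg k : (0 : ℝ) ≤ k)])
  refine this.congr (ae_of_all _ fun t => ?_)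
  simp only [Real.rpow_natCast]
  ring_nf

lemma moment_gaussianReal_add_two (n : ℕ) :
    moment id (n + 2) (gaussianReal 0 1) = (n + 1) * moment id n (gaussianReal 0 1) := by
  set φ : ℝ → ℝ := fun t => exp (-t ^ 2 / 2)
  have hderiv (t : ℝ) : HasDerivAt (fun t => φ t * t ^ (n + 1))
      ((n + 1) * (φ t * t ^ n) - φ t * t ^ (n + 2)) t := by
    have hφ : HasDerivAt φ (-t * φ t) t := by
      simpa [φ, neg_div, mul_comm] using (((hasDerivAt_pow 2 t).div_const 2).fun_neg).exp
    refine (hφ.mul (hasDerivAt_pow (n + 1) t)).congr_deriv ?_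
    push_cast
    ring
  have hibp := integral_eq_zero_of_hasDerivAt_of_integrable hderiv
    (((integrable_exp_neg_sq_div_two_mul_pow n).const_mul _).sub
      (integrable_exp_neg_sq_div_two_mul_pow (n + 2)))
    (integrable_exp_neg_sq_div_two_mul_pow (n + 1))
  rw [integral_sub ((integrable_exp_neg_sq_div_two_mul_pow n).const_mul _)
    (integrable_exp_neg_sq_div_two_mul_pow (n + 2)), integral_const_mul, sub_eq_zero] at hibp
  simp only [moment, integral_gaussianReal_eq_integral_smul one_ne_zero, gaussianPDFReal,
    smul_eq_mul, Pi.pow_apply, id, NNReal.coe_one, mul_one, sub_zero, mul_assoc,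
    integral_const_mul]
  rw [← hibp]
  ring

-- `k - 1` truncates at `k = 0`, where both sides vanish.
lemma moment_gaussianReal_succ (k : ℕ) :
    moment id (k + 1) (gaussianReal 0 1) = k * moment id (k - 1) (gaussianReal 0 1) := by
  rcases k with _ | n
  · simp [moment, integral_id_gaussianReal]
  · simpa using moment_gaussianReal_add_two n

abbrev stdGaussianPi (ι : Type*) [Fintype ι] : Measure (ι → ℝ) :=
  Measure.pi fun _ => gaussianReal 0 1

def quadForm {ι : Type*} [Fintype ι] (b : ι × ι → ℝ) (ξ : ι → ℝ) : ℝ :=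
  ∑ p, b p * (ξ p.1 * ξ p.2)

section StdGaussianPi

variable {ι : Type*} [Fintype ι]

lemma integral_prod_map_stdGaussianPi [DecidableEq ι] (s : Multiset ι) :
    ∫ ξ, (s.map ξ).prod ∂stdGaussianPi ι = ∏ a, moment id (s.count a) (gaussianReal 0 1) := by
  have hprod (ξ : ι → ℝ) : (s.map ξ).prod = ∏ a, ξ a ^ s.count a := by
    rw [Finset.prod_multiset_map_count]
    refine Finset.prod_subset (Finset.subset_univ _) fun a _ ha => ?_
    rw [Multiset.count_eq_zero.mpr (by simpa using ha), pow_zero]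
  simp_rw [hprod]
  exact integral_fintype_prod_eq_prod (fun a t => t ^ s.count a)

lemma integral_prod_map_cons_stdGaussianPi [DecidableEq ι] (i : ι) (s : Multiset ι) :
    ∫ ξ, ((i ::ₘ s).map ξ).prod ∂stdGaussianPi ι =
      s.count i * ∫ ξ, ((s.erase i).map ξ).prod ∂stdGaussianPi ι := by
  simp only [integral_prod_map_stdGaussianPi, Fintype.prod_eq_mul_prod_compl i,
    Multiset.count_cons_self, Multiset.count_erase_self, moment_gaussianReal_succ, mul_assoc]
  congr 2
  refine Finset.prod_congr rfl fun a ha => ?_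
  have hai : a ≠ i := by simpa using ha
  rw [Multiset.count_cons_of_ne hai, Multiset.count_erase_of_ne hai]

lemma integral_prod_map_stdGaussianPi_of_odd [DecidableEq ι] {s : Multiset ι}
    (hs : Odd (Multiset.card s)) : ∫ ξ, (s.map ξ).prod ∂stdGaussianPi ι = 0 := by
  induction hn : Multiset.card s using Nat.strong_induction_on generalizing s with
  | _ n ih =>
    obtain ⟨i, t, rfl⟩ : ∃ i t, s = i ::ₘ t := by
      obtain ⟨i, hi⟩ := Multiset.card_pos_iff_exists_mem.mp hs.pos
      exact ⟨i, Multiset.exists_cons_of_mem hi⟩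
    rw [integral_prod_map_cons_stdGaussianPi]
    by_cases hi : i ∈ t
    · have hcard : Multiset.card (t.erase i) + 2 = n := by
        rw [Multiset.card_erase_of_mem hi, ← hn, Multiset.card_cons, Nat.pred_eq_sub_one]
        have := Multiset.card_pos_iff_exists_mem.mpr ⟨i, hi⟩
        omega
      have hodd : Odd (Multiset.card (t.erase i)) :=
        (Nat.odd_add.mp (hcard.trans hn.symm ▸ hs)).mpr even_two
      rw [ih _ (by omega) hodd rfl, mul_zero]
    · rw [Multiset.count_eq_zero.mpr hi, Nat.cast_zero, zero_mul]

lemma integral_eval_stdGaussianPi (i : ι) : ∫ ξ, ξ i ∂stdGaussianPi ι = 0 := by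
  rw [integral_eval, integral_id_gaussianReal]

lemma integral_eval_mul_eval_stdGaussianPi [DecidableEq ι] (i j : ι) :
    ∫ ξ, ξ i * ξ j ∂stdGaussianPi ι = if i = j then 1 else 0 := by
  have h := integral_prod_map_cons_stdGaussianPi i {j}
  simp only [Multiset.map_cons, Multiset.map_singleton, Multiset.prod_cons,
    Multiset.prod_singleton] at h
  rw [h]
  rcases eq_or_ne i j with rfl | hij
  · simp
  · simp [hij]

lemma integral_eval_mul_eval_mul_eval_mul_eval_stdGaussianPi [DecidableEq ι] (a b c d : ι) :
    ∫ ξ, ξ a * ξ b * ξ c * ξ d ∂stdGaussianPi ι =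
      (if a = b then 1 else 0) * (if c = d then 1 else 0) +
      (if a = c then 1 else 0) * (if b = d then 1 else 0) +
      (if a = d then 1 else 0) * (if b = c then 1 else 0) := by
  have h := integral_prod_map_cons_stdGaussianPi a (b ::ₘ c ::ₘ {d})
  simp only [Multiset.map_cons, Multiset.map_singleton, Multiset.prod_cons,
    Multiset.prod_singleton, ← mul_assoc] at h
  rw [h]
  rcases eq_or_ne a b with rfl | hab
  · rw [Multiset.erase_cons_head]
    by_cases hac : a = c <;> by_cases had : a = d <;> by_cases hcd : c = d <;>
      simp_all [integral_eval_mul_eval_stdGaussianPi]; norm_num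
  rcases eq_or_ne a c with rfl | hac
  · rw [Multiset.erase_cons_tail _ hab.symm, Multiset.erase_cons_head]
    by_cases had : a = d <;> by_cases hbd : b = d <;>
      simp_all [integral_eval_mul_eval_stdGaussianPi]
  rcases eq_or_ne a d with rfl | had
  · rw [Multiset.erase_cons_tail _ hab.symm, Multiset.erase_cons_tail _ hac.symm,
      Multiset.erase_singleton]
    simp [integral_eval_mul_eval_stdGaussianPi, hab, hac, hab.symm, hac.symm]
  · simp [hab, hac, had]

lemma memLp_eval_stdGaussianPi (i : ι) {p : ℝ≥0∞} (hp : p ≠ ∞) :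
    MemLp (fun ξ => ξ i) p (stdGaussianPi ι) :=
  (memLp_id_gaussianReal' p hp).comp_measurePreserving (measurePreserving_eval _ i)

lemma memLp_eval_mul_eval_stdGaussianPi (i j : ι) :
    MemLp (fun ξ => ξ i * ξ j) 2 (stdGaussianPi ι) := by
  have : ENNReal.HolderTriple 4 4 2 := by
    have : NNReal.HolderTriple 4 4 2 := by rw [NNReal.holderTriple_iff]; norm_num
    exact_mod_cast this.coe_ennreal (by norm_num)
  exact (memLp_eval_stdGaussianPi j (p := 4) (by norm_num)).mul
    (memLp_eval_stdGaussianPi i (p := 4) (by norm_num))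

lemma memLp_quadForm_stdGaussianPi (b : ι × ι → ℝ) : MemLp (quadForm b) 2 (stdGaussianPi ι) :=
  memLp_finsetSum _ fun p _ => (memLp_eval_mul_eval_stdGaussianPi p.1 p.2).const_mul (b p)

lemma covariance_eval_eval_stdGaussianPi [DecidableEq ι] (i j : ι) :
    cov[fun ξ => ξ i, fun ξ => ξ j; stdGaussianPi ι] = if i = j then 1 else 0 := by
  rw [covariance_eq_sub (memLp_eval_stdGaussianPi i (by norm_num))
    (memLp_eval_stdGaussianPi j (by norm_num))]
  simp [integral_eval_mul_eval_stdGaussianPi, integral_eval_stdGaussianPi]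

lemma covariance_eval_eval_mul_eval_stdGaussianPi (i a b : ι) :
    cov[fun ξ => ξ i, fun ξ => ξ a * ξ b; stdGaussianPi ι] = 0 := by
  classical
  rw [covariance_eq_sub (memLp_eval_stdGaussianPi i (by norm_num))
    (memLp_eval_mul_eval_stdGaussianPi a b), integral_eval_stdGaussianPi, zero_mul, sub_zero]
  simpa [mul_assoc] using
    integral_prod_map_stdGaussianPi_of_odd (s := {i, a, b}) (by simp [Nat.odd_iff])

lemma covariance_eval_mul_eval_stdGaussianPi [DecidableEq ι] (a b c d : ι) :
    cov[fun ξ => ξ a * ξ b, fun ξ => ξ c * ξ d; stdGaussianPi ι] =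
      (if a = c then 1 else 0) * (if b = d then 1 else 0) +
      (if a = d then 1 else 0) * (if b = c then 1 else 0) := by
  rw [covariance_eq_sub (memLp_eval_mul_eval_stdGaussianPi a b)
    (memLp_eval_mul_eval_stdGaussianPi c d)]
  simp only [Pi.mul_apply, ← mul_assoc, integral_eval_mul_eval_mul_eval_mul_eval_stdGaussianPi,
    integral_eval_mul_eval_stdGaussianPi]
  ring

lemma covariance_eval_quadForm_stdGaussianPi (i : ι) (b : ι × ι → ℝ) :
    cov[fun ξ => ξ i, quadForm b; stdGaussianPi ι] = 0 := by
  unfold quadForm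
  rw [covariance_fun_sum_right
    (fun p => (memLp_eval_mul_eval_stdGaussianPi p.1 p.2).const_mul (b p))
    (memLp_eval_stdGaussianPi i (by norm_num))]
  simp [covariance_const_mul_right, covariance_eval_eval_mul_eval_stdGaussianPi]

lemma covariance_quadForm_stdGaussianPi (a : ι × ι → ℝ) {b : ι × ι → ℝ}
    (hb : ∀ p, b p.swap = b p) :
    cov[quadForm a, quadForm b; stdGaussianPi ι] = 2 * (a ⬝ᵥ b) := by
  classical
  have hmemLp (c : ι × ι → ℝ) (p : ι × ι) :
      MemLp (fun ξ : ι → ℝ => c p * (ξ p.1 * ξ p.2)) 2 (stdGaussianPi ι) :=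
    (memLp_eval_mul_eval_stdGaussianPi p.1 p.2).const_mul (c p)
  unfold quadForm
  rw [covariance_fun_sum_fun_sum (hmemLp a) (hmemLp b), dotProduct, Finset.mul_sum]
  refine Finset.sum_congr rfl fun p _ => ?_
  simp only [covariance_const_mul_left, covariance_const_mul_right,
    covariance_eval_mul_eval_stdGaussianPi]
  have hid (q : ι × ι) : (p.2 = q.2 ∧ p.1 = q.1) ↔ q = p := by
    rw [Prod.ext_iff]; exact ⟨fun h => ⟨h.2.symm, h.1.symm⟩, fun h => ⟨h.2.symm, h.1.symm⟩⟩
  have hswap (q : ι × ι) : (p.2 = q.1 ∧ p.1 = q.2) ↔ q = p.swap := by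
    rw [Prod.ext_iff]; exact ⟨fun h => ⟨h.1.symm, h.2.symm⟩, fun h => ⟨h.1.symm, h.2.symm⟩⟩
  simp [mul_add, Finset.sum_add_distrib, ← ite_and, hid, hswap, hb]
  ring

end StdGaussianPi

section GaussPi

variable {N : ℕ} (μ : Fin N → ℝ) {L : Matrix (Fin N) (Fin N) ℝ}

lemma abs_det_mul_gaussPi_density (hL : IsUnit L.det) (ξ : Fin N → ℝ) :
    |L.det| * ((√((2 * π) ^ N * (L * Lᵀ).det))⁻¹ *
      exp (-(1 / 2) * ((L *ᵥ ξ) ⬝ᵥ (L * Lᵀ)⁻¹ *ᵥ (L *ᵥ ξ)))) =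
    ∏ i, gaussianPDFReal 0 1 (ξ i) := by
  have hLξ : L⁻¹ *ᵥ (L *ᵥ ξ) = ξ := by rw [mulVec_mulVec, nonsing_inv_mul L hL, one_mulVec]
  have hquad : (L *ᵥ ξ) ⬝ᵥ (L * Lᵀ)⁻¹ *ᵥ (L *ᵥ ξ) = ξ ⬝ᵥ ξ := by
    rw [Matrix.mul_inv_rev, ← mulVec_mulVec, hLξ, ← transpose_nonsing_inv, dotProduct_mulVec,
      vecMul_transpose, hLξ]
  have hnorm : √((2 * π) ^ N * (L * Lᵀ).det) = √(2 * π) ^ N * |L.det| := by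
    rw [det_mul, det_transpose, Real.sqrt_mul (by positivity), Real.sqrt_mul_self_eq_abs,
      ← Real.sqrt_sq (by positivity : 0 ≤ √(2 * π) ^ N), ← pow_mul, pow_mul',
      Real.sq_sqrt (by positivity)]
  have hdet : |L.det| ≠ 0 := abs_ne_zero.mpr (isUnit_iff_ne_zero.mp hL)
  rw [hquad, hnorm]
  simp only [gaussianPDFReal, Finset.prod_mul_distrib, Finset.prod_const, Finset.card_univ,
    Fintype.card_fin, ← Real.exp_sum, dotProduct, Finset.mul_sum, NNReal.coe_one, mul_one,
    sub_zero, inv_pow]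
  field_simp

theorem map_gaussPi_mul_transpose (hL : IsUnit L.det) :
    (gaussPi N μ (L * Lᵀ)).map (fun x => L⁻¹ *ᵥ (x - μ)) = stdGaussianPi (Fin N) := by
  have hleft : Function.LeftInverse (fun x => L⁻¹ *ᵥ (x - μ)) (fun ξ => L *ᵥ ξ + μ) :=
    fun ξ => by simp [mulVec_mulVec, nonsing_inv_mul L hL]
  have hright : Function.RightInverse (fun x => L⁻¹ *ᵥ (x - μ)) (fun ξ => L *ᵥ ξ + μ) :=
    fun x => by simp [mulVec_mulVec, mul_nonsing_inv L hL]
  have hderiv (ξ : Fin N → ℝ) (s : Set (Fin N → ℝ)) :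
      HasFDerivWithinAt (fun ξ => L *ᵥ ξ + μ) (toLin' L).toContinuousLinearMap s ξ :=
    ((toLin' L).toContinuousLinearMap.hasFDerivAt.add_const μ).hasFDerivWithinAt
  have hint : Integrable (fun ξ : Fin N → ℝ => ∏ i, gaussianPDFReal 0 1 (ξ i)) :=
    Integrable.fintype_prod fun _ => integrable_gaussianPDFReal 0 1
  symm
  refine Measure.pi_eq fun s hs => ?_
  have hbox := MeasurableSet.univ_pi hs
  rw [Measure.map_apply (by fun_prop) hbox, gaussPi, withDensity_apply _ (by measurability),
    ← Set.image_eq_preimage_of_inverse hleft hright,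
    lintegral_image_eq_lintegral_abs_det_fderiv_mul volume hbox (fun ξ _ => hderiv ξ _)
      hleft.injective.injOn]
  simp only [ContinuousLinearMap.det, LinearMap.coe_toContinuousLinearMap, LinearMap.det_toLin',
    add_sub_cancel_right, ← ENNReal.ofReal_mul (abs_nonneg _), abs_det_mul_gaussPi_density hL]
  rw [← ofReal_integral_eq_lintegral_ofReal hint.integrableOn
      (ae_of_all _ fun ξ => Finset.prod_nonneg fun i _ => gaussianPDFReal_nonneg 0 1 _),
    volume_pi, Measure.restrict_pi_pi, integral_fintype_prod_eq_prod,
    ENNReal.ofReal_prod_of_nonneg fun i _ => setIntegral_nonneg (hs i)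
      fun t _ => gaussianPDFReal_nonneg 0 1 t]
  simp [gaussianReal_apply_eq_integral]

lemma bip_gaussPi_exp_comp (hL : IsUnit L.det) {f g : (Fin N → ℝ) → ℝ}
    (hf : MemLp f 2 (stdGaussianPi (Fin N))) (hg : MemLp g 2 (stdGaussianPi (Fin N))) :
    bip (gaussPi N μ (L * Lᵀ)) (fun x => exp (f (L⁻¹ *ᵥ (x - μ))))
      (fun x => exp (g (L⁻¹ *ᵥ (x - μ)))) = cov[f, g; stdGaussianPi (Fin N)] := by
  have hmap := map_gaussPi_mul_transpose μ hL
  have hT : AEMeasurable (fun x => L⁻¹ *ᵥ (x - μ)) (gaussPi N μ (L * Lᵀ)) := by fun_prop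
  have hf' := hf.1
  have hg' := hg.1
  rw [← hmap] at hf' hg'
  rw [covariance_eq_sub hf hg, ← hmap, integral_map hT (hf'.mul hg'), integral_map hT hf',
    integral_map hT hg']
  simp [bip]

end GaussPi

/-- The vectorizations `p ↦ A p.1 p.2` of the symmetric matrices `A`. -/
def symmetricVecs (ι : Type*) : Submodule ℝ (ι × ι → ℝ) :=
  LinearMap.range (LinearMap.funLeft ℝ ℝ (Function.uncurry (Sym2.mk (α := ι))))

lemma card_sym2_fin (N : ℕ) : Fintype.card (Sym2 (Fin N)) = N * (N + 1) / 2 := by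
  rw [Sym2.card, Fintype.card_fin, Nat.choose_two_right, Nat.add_sub_cancel, mul_comm]

section Duplication

variable {ι κ : Type*} [Fintype κ] {D : Matrix (ι × ι) κ ℝ}

lemma symmetricVecs_le_range_mulVecLin (vech : Matrix ι ι ℝ → κ → ℝ)
    (hD : ∀ A : Matrix ι ι ℝ, A.IsSymm → ∀ p, (D *ᵥ vech A) p = A p.1 p.2) :
    symmetricVecs ι ≤ LinearMap.range D.mulVecLin := by
  rintro _ ⟨g, rfl⟩
  have hsymm : (Matrix.of fun i j => g s(i, j)).IsSymm :=
    IsSymm.ext fun i j => congrArg g Sym2.eq_swap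
  exact ⟨vech _, funext fun p => hD _ hsymm p⟩

lemma finrank_symmetricVecs [Fintype ι] :
    Module.finrank ℝ (symmetricVecs ι) = Fintype.card (Sym2 ι) := by
  rw [symmetricVecs, LinearMap.finrank_range_of_inj
      (LinearMap.funLeft_injective_of_surjective _ _ _ Sym2.mk_surjective),
    Module.finrank_fintype_fun_eq_card]

variable [Fintype ι]

lemma range_mulVecLin_eq_symmetricVecs (hcard : Fintype.card κ = Fintype.card (Sym2 ι))
    (hle : symmetricVecs ι ≤ LinearMap.range D.mulVecLin) :
    LinearMap.range D.mulVecLin = symmetricVecs ι := by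
  refine (Submodule.eq_of_le_of_finrank_le hle ?_).symm
  rw [finrank_symmetricVecs, ← hcard, ← Module.finrank_fintype_fun_eq_card ℝ]
  exact LinearMap.finrank_range_le _

lemma injective_mulVec_of_symmetricVecs_le (hcard : Fintype.card κ = Fintype.card (Sym2 ι))
    (hle : symmetricVecs ι ≤ LinearMap.range D.mulVecLin) : Function.Injective D.mulVec := by
  have h := LinearMap.finrank_range_add_finrank_ker D.mulVecLin
  rw [range_mulVecLin_eq_symmetricVecs hcard hle, finrank_symmetricVecs,
    Module.finrank_fintype_fun_eq_card, ← hcard, Nat.add_eq_left] at h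
  exact LinearMap.ker_eq_bot.mp (Submodule.finrank_eq_zero.mp h)

lemma apply_swap_of_symmetricVecs_le (hcard : Fintype.card κ = Fintype.card (Sym2 ι))
    (hle : symmetricVecs ι ≤ LinearMap.range D.mulVecLin) (p : ι × ι) (m : κ) :
    D p.swap m = D p m := by
  classical
  obtain ⟨g, hg⟩ : D.col m ∈ symmetricVecs ι := by
    rw [← range_mulVecLin_eq_symmetricVecs hcard hle, ← mulVec_single_one]
    exact LinearMap.mem_range_self _ _
  have hgD (q : ι × ι) : g s(q.1, q.2) = D q m := congrFun hg q
  rw [← hgD, ← hgD, Prod.fst_swap, Prod.snd_swap, Sym2.eq_swap]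

end Duplication

section SquareRoot

variable {ι κ : Type*} [Fintype ι] [Fintype κ] [DecidableEq κ] {D : Matrix ι κ ℝ}
  {R : Matrix κ κ ℝ} {c : ℝ}

lemma isUnit_det_of_mul_self_eq_smul (hc : c ≠ 0) (hR : R * R = c • (Dᵀ * D))
    (hD : Function.Injective D.mulVec) : IsUnit R.det := by
  have hDD : IsUnit (Dᵀ * D) := by
    refine mulVec_injective_iff_isUnit.mp ?_
    have hker := ker_mulVecLin_transpose_mul_self D
    rw [(LinearMap.ker_eq_bot (f := D.mulVecLin)).mpr hD, LinearMap.ker_eq_bot] at hker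
    exact hker
  have hRR : IsUnit (R.det * R.det) := by
    rw [← det_mul, hR, det_smul]
    exact (hc.isUnit.pow _).mul ((isUnit_iff_isUnit_det _).mp hDD)
  exact isUnit_of_mul_isUnit_left hRR

lemma mulVec_eq_smul_inv_mul_transpose_mulVec (hR : R * R = c • (Dᵀ * D)) (hRu : IsUnit R.det)
    (v : κ → ℝ) : R *ᵥ v = c • ((R⁻¹ * Dᵀ) *ᵥ (D *ᵥ v)) := by
  calc R *ᵥ v = R⁻¹ *ᵥ ((R * R) *ᵥ v) := by
        rw [← mulVec_mulVec, mulVec_mulVec _ R⁻¹, nonsing_inv_mul R hRu, one_mulVec]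
    _ = c • ((R⁻¹ * Dᵀ) *ᵥ (D *ᵥ v)) := by
        rw [hR, smul_mulVec, mulVec_smul, mulVec_mulVec, mulVec_mulVec, Matrix.mul_assoc]

lemma inv_mul_transpose_mul_transpose (hc : c ≠ 0) (hR : R * R = c • (Dᵀ * D))
    (hRs : R.IsSymm) (hRu : IsUnit R.det) : (R⁻¹ * Dᵀ) * (R⁻¹ * Dᵀ)ᵀ = c⁻¹ • 1 := by
  have hDD : Dᵀ * D = c⁻¹ • (R * R) := by rw [hR, smul_smul, inv_mul_cancel₀ hc, one_smul]
  rw [transpose_mul, transpose_transpose, transpose_nonsing_inv, hRs.eq, Matrix.mul_assoc,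
    ← Matrix.mul_assoc Dᵀ, hDD, Matrix.smul_mul, Matrix.mul_smul, Matrix.mul_assoc,
    mul_nonsing_inv R hRu, Matrix.mul_one, nonsing_inv_mul R hRu]

end SquareRoot

lemma gTwo_eq_exp_quadForm {N M : ℕ} (μ : Fin N → ℝ) (L : Matrix (Fin N) (Fin N) ℝ)
    {vech : Matrix (Fin N) (Fin N) ℝ → Fin M → ℝ} {D : Matrix (Fin N × Fin N) (Fin M) ℝ}
    (hD : ∀ A : Matrix (Fin N) (Fin N) ℝ, A.IsSymm → ∀ p, (D *ᵥ vech A) p = A p.1 p.2)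
    {R : Matrix (Fin M) (Fin M) ℝ} {c : ℝ} (hR : R * R = c • (Dᵀ * D)) (hRu : IsUnit R.det)
    (k : Fin M) :
    gTwo N M μ L vech R k = fun x => exp (-(c * quadForm ((R⁻¹ * Dᵀ) k) (L⁻¹ *ᵥ (x - μ)))) := by
  funext x
  set ξ := L⁻¹ *ᵥ (x - μ)
  have hvec : D *ᵥ vech (vecMulVec ξ ξ) = fun p => ξ p.1 * ξ p.2 :=
    funext (hD _ (transpose_vecMulVec ξ ξ))
  rw [gTwo, mul_vecMulVec, vecMulVec_mul, vecMul_transpose,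
    mulVec_eq_smul_inv_mul_transpose_mulVec hR hRu, hvec]
  rfl

/-- **Orthonormality of the indefinite-Gaussian basis.**  With Gaussian measure
`ν = N(μ, Σ)`, `Σ = LLᵀ` a Cholesky factorization, the functions
`g₁(x) = exp (-L⁻¹(x−μ))` (componentwise) and
`g₂(x) = exp (-√((1/2)DᵀD)·vech (L⁻¹(x−μ)(x−μ)ᵀL⁻ᵀ))` (componentwise) form an orthonormal
family in the indefinite-Gaussian subspace under the Bayes-space inner product:
`⟨g,g⟩ = Identity`.  Here `D` is the duplication matrix (`vec A = D vech A` for symmetric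
`A`) and `R = √((1/2)DᵀD)`. -/
theorem indefGaussian_basis_orthonormal (N M : ℕ) (hM : M = N * (N + 1) / 2)
    (μ : Fin N → ℝ) (L : Matrix (Fin N) (Fin N) ℝ) (hL : IsUnit L.det)
    (vech : Matrix (Fin N) (Fin N) ℝ → Fin M → ℝ)
    (D : Matrix (Fin N × Fin N) (Fin M) ℝ)
    (hD : ∀ A : Matrix (Fin N) (Fin N) ℝ, A.IsSymm →
      ∀ ij : Fin N × Fin N, (D.mulVec (vech A)) ij = A ij.1 ij.2)
    (R : Matrix (Fin M) (Fin M) ℝ) (hR : R * R = (2⁻¹ : ℝ) • (Dᵀ * D)) (hRs : R.IsSymm) :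
    (∀ i j : Fin N, bip (gaussPi N μ (L * Lᵀ)) (gOne N μ L i) (gOne N μ L j) =
      if i = j then 1 else 0) ∧
    (∀ k l : Fin M, bip (gaussPi N μ (L * Lᵀ)) (gTwo N M μ L vech R k) (gTwo N M μ L vech R l) =
      if k = l then 1 else 0) ∧
    (∀ (i : Fin N) (k : Fin M),
      bip (gaussPi N μ (L * Lᵀ)) (gOne N μ L i) (gTwo N M μ L vech R k) = 0) := by
  have hcard : Fintype.card (Fin M) = Fintype.card (Sym2 (Fin N)) := by
    rw [Fintype.card_fin, card_sym2_fin, hM]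
  have hle := symmetricVecs_le_range_mulVecLin vech hD
  have hRu := isUnit_det_of_mul_self_eq_smul (by norm_num) hR
    (injective_mulVec_of_symmetricVecs_le hcard hle)
  set B := R⁻¹ * Dᵀ with hB
  have hBswap (k : Fin M) (p : Fin N × Fin N) : B k p.swap = B k p := by
    simp only [hB, mul_apply, transpose_apply, apply_swap_of_symmetricVecs_le hcard hle]
  have hBB : B * Bᵀ = (2⁻¹ : ℝ)⁻¹ • 1 := inv_mul_transpose_mul_transpose (by norm_num) hR hRs hRu
  have hOne (i : Fin N) : MemLp (fun ξ : Fin N → ℝ => -ξ i) 2 (stdGaussianPi (Fin N)) :=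
    (memLp_eval_stdGaussianPi i (by norm_num)).neg
  have hTwo (k : Fin M) :
      MemLp (fun ξ => -(2⁻¹ * quadForm (B k) ξ)) 2 (stdGaussianPi (Fin N)) :=
    ((memLp_quadForm_stdGaussianPi (B k)).const_mul 2⁻¹).neg
  unfold gOne
  simp only [gTwo_eq_exp_quadForm μ L hD hR hRu]
  refine ⟨fun i j => ?_, fun k l => ?_, fun i k => ?_⟩
  · rw [bip_gaussPi_exp_comp μ hL (hOne i) (hOne j), covariance_fun_neg_left,
      covariance_fun_neg_right, neg_neg, covariance_eval_eval_stdGaussianPi]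
  · rw [bip_gaussPi_exp_comp μ hL (hTwo k) (hTwo l), covariance_fun_neg_left,
      covariance_fun_neg_right, neg_neg, covariance_const_mul_left, covariance_const_mul_right,
      covariance_quadForm_stdGaussianPi _ (hBswap l), show B k ⬝ᵥ B l = (B * Bᵀ) k l from rfl,
      hBB, Matrix.smul_apply, one_apply]
    split_ifs <;> norm_num
  · rw [bip_gaussPi_exp_comp μ hL (hOne i) (hTwo k), covariance_fun_neg_left,
      covariance_fun_neg_right, neg_neg, covariance_const_mul_right,
      covariance_eval_quadForm_stdGaussianPi, mul_zero]
end
end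

section
/- For p = c·exp(-φ) ∈ B² with Gaussian measure ν = N(μ, Σ), Σ = LLᵀ, the first block of projection coordinates onto the indefinite-Gaussian subspace satisfies α₁ = ⟨g₁, p⟩ = Lᵀ·E_ν[∂φ/∂xᵀ], the Cholesky-transposed expected gradient of φ. -/
open MeasureTheory Real Matrix

noncomputable section

/-! With `y = L⁻¹(x - μ)` one has `log g₁ᵢ = -yᵢ` and `log p = log c - φ`, so `⟨g₁ᵢ, p⟩` is the
covariance of `yᵢ` and `φ` under `ν`. The Gaussian density `ρ` satisfies
`∂ᵥρ = -(Σ⁻¹(x - μ) ⬝ v) ρ`, so integration by parts gives Stein's identity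
`E_ν[(Σ⁻¹(x - μ) ⬝ v) φ] = E_ν[∂ᵥφ]`, and for `v = L eᵢ` the factor `Σ⁻¹(x - μ) ⬝ v` is exactly
`yᵢ`. With `φ = 1` this shows `E_ν[yᵢ] = 0`, so the covariance is `E_ν[yᵢ φ] = (Lᵀ E_ν[∇φ])ᵢ`.
The substitution `y = L⁻¹(x - μ)` turns `ρ` into a product of one-dimensional Gaussians, which
gives the integrability of `ρ` and `yᵢ ρ`. -/

theorem integral_withDensity_ofReal {X : Type*} [MeasurableSpace X] {μ : Measure X} {ρ : X → ℝ}
    (hρ : Measurable ρ) (hρ0 : 0 ≤ ρ) (g : X → ℝ) :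
    ∫ x, g x ∂μ.withDensity (fun x => ENNReal.ofReal (ρ x)) = ∫ x, ρ x * g x ∂μ := by
  rw [integral_withDensity_eq_integral_toReal_smul hρ.ennreal_ofReal
    (ae_of_all _ fun _ => ENNReal.ofReal_lt_top)]
  simp [ENNReal.toReal_ofReal (hρ0 _)]

theorem integrable_withDensity_ofReal_iff {X : Type*} [MeasurableSpace X] {μ : Measure X}
    {ρ : X → ℝ} (hρ : Measurable ρ) (hρ0 : 0 ≤ ρ) {g : X → ℝ} :
    Integrable g (μ.withDensity fun x => ENNReal.ofReal (ρ x)) ↔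
      Integrable (fun x => ρ x * g x) μ := by
  rw [integrable_withDensity_iff_integrable_smul' hρ.ennreal_ofReal
    (ae_of_all _ fun _ => ENNReal.ofReal_lt_top)]
  simp [ENNReal.toReal_ofReal (hρ0 _)]

theorem Matrix.IsSymm.hasDerivAt_dotProduct_mulVec_line {N : ℕ} {M : Matrix (Fin N) (Fin N) ℝ}
    (hM : M.IsSymm) (w v : Fin N → ℝ) :
    HasDerivAt (fun t : ℝ => (w + t • v) ⬝ᵥ M *ᵥ (w + t • v)) (2 * (M *ᵥ w ⬝ᵥ v)) 0 := by
  have hexpand : ∀ t : ℝ, (w + t • v) ⬝ᵥ M *ᵥ (w + t • v)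
      = w ⬝ᵥ M *ᵥ w + (v ⬝ᵥ M *ᵥ w + w ⬝ᵥ M *ᵥ v) * t + v ⬝ᵥ M *ᵥ v * t ^ 2 := by
    intro t
    simp only [mulVec_add, mulVec_smul, add_dotProduct, dotProduct_add, smul_dotProduct,
      dotProduct_smul, smul_eq_mul]
    ring
  have hsymm : w ⬝ᵥ M *ᵥ v = M *ᵥ w ⬝ᵥ v := by
    rw [dotProduct_mulVec, ← mulVec_transpose, hM.eq, dotProduct_comm]
  have hpoly : HasDerivAt (fun t : ℝ => w ⬝ᵥ M *ᵥ w + (v ⬝ᵥ M *ᵥ w + w ⬝ᵥ M *ᵥ v) * t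
      + v ⬝ᵥ M *ᵥ v * t ^ 2) (v ⬝ᵥ M *ᵥ w + w ⬝ᵥ M *ᵥ v) 0 :=
    ((((hasDerivAt_id (0 : ℝ)).const_mul (v ⬝ᵥ M *ᵥ w + w ⬝ᵥ M *ᵥ v)).const_add
      (w ⬝ᵥ M *ᵥ w)).add ((hasDerivAt_pow 2 (0 : ℝ)).const_mul (v ⬝ᵥ M *ᵥ v))).congr_deriv
        (by simp)
  rw [funext hexpand]
  convert hpoly using 1
  rw [dotProduct_comm v, hsymm]
  ring

def gaussDensity (N : ℕ) (μ : Fin N → ℝ) (S : Matrix (Fin N) (Fin N) ℝ) (x : Fin N → ℝ) : ℝ :=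
  (Real.sqrt ((2 * π) ^ N * S.det))⁻¹ * Real.exp (-(1 / 2) * ((x - μ) ⬝ᵥ S⁻¹.mulVec (x - μ)))

section GaussDensity

variable {N : ℕ} {μ : Fin N → ℝ} {S : Matrix (Fin N) (Fin N) ℝ}

theorem gaussDensity_nonneg : 0 ≤ gaussDensity N μ S :=
  fun _ => mul_nonneg (inv_nonneg.2 (sqrt_nonneg _)) (exp_pos _).le

theorem continuous_gaussDensity : Continuous (gaussDensity N μ S) := by
  unfold gaussDensity
  fun_prop

theorem integral_gaussPi (g : (Fin N → ℝ) → ℝ) :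
    ∫ x, g x ∂gaussPi N μ S = ∫ x, gaussDensity N μ S x * g x :=
  integral_withDensity_ofReal continuous_gaussDensity.measurable gaussDensity_nonneg g

theorem integrable_gaussPi_iff {g : (Fin N → ℝ) → ℝ} :
    Integrable g (gaussPi N μ S) ↔ Integrable fun x => gaussDensity N μ S x * g x :=
  integrable_withDensity_ofReal_iff continuous_gaussDensity.measurable gaussDensity_nonneg

theorem hasLineDerivAt_gaussDensity (hS : S.IsSymm) (x v : Fin N → ℝ) :
    HasLineDerivAt ℝ (gaussDensity N μ S) (-(S⁻¹ *ᵥ (x - μ) ⬝ᵥ v) * gaussDensity N μ S x) x v := by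
  have hQ := (hS.inv.hasDerivAt_dotProduct_mulVec_line (x - μ) v).const_mul (-(1 / 2) : ℝ)
  have hρ := hQ.exp.const_mul (Real.sqrt ((2 * π) ^ N * S.det))⁻¹
  have hline : (fun t : ℝ => gaussDensity N μ S (x + t • v)) = fun t =>
      (Real.sqrt ((2 * π) ^ N * S.det))⁻¹ *
        Real.exp (-(1 / 2) * ((x - μ + t • v) ⬝ᵥ S⁻¹ *ᵥ (x - μ + t • v))) := by
    simp only [gaussDensity, add_sub_right_comm]
  show HasDerivAt (fun t : ℝ => gaussDensity N μ S (x + t • v)) _ 0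
  rw [hline]
  exact hρ.congr_deriv (by simp only [gaussDensity, zero_smul, add_zero]; ring)

theorem integral_gaussPi_dotProduct_mul_eq_integral_fderiv (hS : S.IsSymm)
    {φ : (Fin N → ℝ) → ℝ} (hφ : Differentiable ℝ φ) {v : Fin N → ℝ}
    (h₁ : Integrable φ (gaussPi N μ S))
    (h₂ : Integrable (fun x => (S⁻¹ *ᵥ (x - μ) ⬝ᵥ v) * φ x) (gaussPi N μ S))
    (h₃ : Integrable (fun x => fderiv ℝ φ x v) (gaussPi N μ S)) :
    ∫ x, (S⁻¹ *ᵥ (x - μ) ⬝ᵥ v) * φ x ∂gaussPi N μ S = ∫ x, fderiv ℝ φ x v ∂gaussPi N μ S := by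
  rw [integrable_gaussPi_iff] at h₁ h₂ h₃
  have hparts := integral_bilinear_hasLineDerivAt_right_eq_neg_left_of_integrable
    (B := ContinuousLinearMap.mul ℝ ℝ) (f := φ) (g := gaussDensity N μ S)
    (g' := fun x => -(S⁻¹ *ᵥ (x - μ) ⬝ᵥ v) * gaussDensity N μ S x)
    (h₃.congr (ae_of_all _ fun x => mul_comm _ _)) ?_
    (h₁.congr (ae_of_all _ fun x => mul_comm _ _))
    (fun x _ => (hφ x).hasFDerivAt.hasLineDerivAt v)
    (fun x _ => hasLineDerivAt_gaussDensity hS x v)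
  · simp only [ContinuousLinearMap.mul_apply'] at hparts
    rw [integral_gaussPi, integral_gaussPi]
    calc ∫ x, gaussDensity N μ S x * ((S⁻¹ *ᵥ (x - μ) ⬝ᵥ v) * φ x)
        = -∫ x, φ x * (-(S⁻¹ *ᵥ (x - μ) ⬝ᵥ v) * gaussDensity N μ S x) := by
          rw [← integral_neg]; congr 1; ext x; ring
      _ = ∫ x, gaussDensity N μ S x * fderiv ℝ φ x v := by
          rw [hparts, neg_neg]; congr 1; ext x; ring
  · exact h₂.neg.congr (ae_of_all _ fun x => by
      simp only [Pi.neg_apply, ContinuousLinearMap.mul_apply']; ring)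

end GaussDensity

theorem MeasureTheory.Integrable.comp_mulVec {N : ℕ} {A : Matrix (Fin N) (Fin N) ℝ}
    (hA : A.det ≠ 0) {f : (Fin N → ℝ) → ℝ} (hf : Integrable f) : Integrable fun x => f (A *ᵥ x) := by
  have hmap := Real.map_linearMap_volume_pi_eq_smul_volume_pi (f := toLin' A)
    (by rwa [LinearMap.det_toLin'])
  have hf' : Integrable f (Measure.map (toLin' A) volume) := by
    rw [hmap]
    exact hf.smul_measure ENNReal.ofReal_ne_top
  exact hf'.comp_measurable (toLin' A).continuous_of_finiteDimensional.measurable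

theorem exp_neg_half_dotProduct_self {N : ℕ} (y : Fin N → ℝ) :
    exp (-(1 / 2) * (y ⬝ᵥ y)) = ∏ k, exp (-(1 / 2) * y k ^ 2) := by
  rw [dotProduct, Finset.mul_sum, exp_sum]
  simp only [pow_two]

theorem integrable_exp_neg_half_dotProduct_self {N : ℕ} :
    Integrable fun y : Fin N → ℝ => exp (-(1 / 2) * (y ⬝ᵥ y)) := by
  simp only [exp_neg_half_dotProduct_self]
  exact Integrable.fintype_prod (μ := fun _ => volume)
    (f := fun _ t => exp (-(1 / 2) * t ^ 2)) fun _ => integrable_exp_neg_mul_sq (by norm_num)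

theorem integrable_apply_mul_exp_neg_half_dotProduct_self {N : ℕ} (i : Fin N) :
    Integrable fun y : Fin N → ℝ => y i * exp (-(1 / 2) * (y ⬝ᵥ y)) := by
  have hprod : Integrable fun y : Fin N → ℝ =>
      ∏ k, (if k = i then y k else 1) * exp (-(1 / 2) * y k ^ 2) := by
    refine Integrable.fintype_prod (μ := fun _ => volume)
      (f := fun k t => (if k = i then t else 1) * exp (-(1 / 2) * t ^ 2)) fun k => ?_
    split_ifs
    · exact integrable_mul_exp_neg_mul_sq (by norm_num)
    · simpa using integrable_exp_neg_mul_sq (b := 1 / 2) (by norm_num)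
  simpa only [Finset.prod_mul_distrib, Finset.prod_ite_eq', Finset.mem_univ, if_true,
    Finset.prod_const_one, ← exp_neg_half_dotProduct_self] using hprod

section Cholesky

variable {N : ℕ} {μ : Fin N → ℝ} {L : Matrix (Fin N) (Fin N) ℝ}

theorem dotProduct_inv_mul_transpose_mulVec (w : Fin N → ℝ) :
    w ⬝ᵥ (L * Lᵀ)⁻¹ *ᵥ w = L⁻¹ *ᵥ w ⬝ᵥ L⁻¹ *ᵥ w := by
  rw [Matrix.mul_inv_rev, ← transpose_nonsing_inv, ← mulVec_mulVec, dotProduct_mulVec,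
    vecMul_transpose]

theorem inv_mul_transpose_mulVec_dotProduct_col (hL : IsUnit L.det) (w : Fin N → ℝ)
    (i : Fin N) : (L * Lᵀ)⁻¹ *ᵥ w ⬝ᵥ L.col i = (L⁻¹ *ᵥ w) i := by
  rw [← mulVec_single_one, Matrix.mul_inv_rev, ← transpose_nonsing_inv, ← mulVec_mulVec,
    dotProduct_comm, dotProduct_mulVec, vecMul_transpose, mulVec_mulVec, nonsing_inv_mul _ hL,
    one_mulVec, single_one_dotProduct]

theorem integrable_gaussPi_comp_cholesky (hL : IsUnit L.det) {f : (Fin N → ℝ) → ℝ}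
    (hf : Integrable fun y => f y * exp (-(1 / 2) * (y ⬝ᵥ y))) :
    Integrable (fun x => f (L⁻¹ *ᵥ (x - μ))) (gaussPi N μ (L * Lᵀ)) := by
  have hinv : L⁻¹.det ≠ 0 := (isUnit_nonsing_inv_det L hL).ne_zero
  rw [integrable_gaussPi_iff]
  refine (((hf.comp_mulVec hinv).comp_sub_right μ).const_mul
    (Real.sqrt ((2 * π) ^ N * (L * Lᵀ).det))⁻¹).congr (ae_of_all _ fun x => ?_)
  simp only [gaussDensity, dotProduct_inv_mul_transpose_mulVec]
  ring

theorem isFiniteMeasure_gaussPi_mul_transpose (hL : IsUnit L.det) :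
    IsFiniteMeasure (gaussPi N μ (L * Lᵀ)) := by
  have h1 : Integrable (fun _ => (1 : ℝ)) (gaussPi N μ (L * Lᵀ)) :=
    integrable_gaussPi_comp_cholesky (f := fun _ => 1) hL
      (by simpa only [one_mul] using integrable_exp_neg_half_dotProduct_self)
  exact (integrable_const_iff.1 h1).resolve_left one_ne_zero

theorem integrable_gaussPi_cholesky_coord (hL : IsUnit L.det) (i : Fin N) :
    Integrable (fun x => (L⁻¹ *ᵥ (x - μ)) i) (gaussPi N μ (L * Lᵀ)) :=
  integrable_gaussPi_comp_cholesky (f := fun y => y i) hL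
    (integrable_apply_mul_exp_neg_half_dotProduct_self i)

theorem integral_gaussPi_cholesky_coord_mul (hL : IsUnit L.det) {φ : (Fin N → ℝ) → ℝ}
    (hφ : Differentiable ℝ φ) (h₁ : Integrable φ (gaussPi N μ (L * Lᵀ))) {i : Fin N}
    (h₂ : Integrable (fun x => (L⁻¹ *ᵥ (x - μ)) i * φ x) (gaussPi N μ (L * Lᵀ)))
    (h₃ : ∀ j, Integrable (fun x => fderiv ℝ φ x (Pi.single j 1)) (gaussPi N μ (L * Lᵀ))) :
    ∫ x, (L⁻¹ *ᵥ (x - μ)) i * φ x ∂gaussPi N μ (L * Lᵀ) =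
      (Lᵀ *ᵥ fun j => ∫ x, fderiv ℝ φ x (Pi.single j 1) ∂gaussPi N μ (L * Lᵀ)) i := by
  have hcol : ∀ x, fderiv ℝ φ x (L.col i) = ∑ j, L j i * fderiv ℝ φ x (Pi.single j 1) := by
    intro x
    conv_lhs => rw [pi_eq_sum_univ' (L.col i)]
    simp only [map_sum, map_smul, smul_eq_mul, col_apply]
  have hstein := integral_gaussPi_dotProduct_mul_eq_integral_fderiv (μ := μ)
    (isSymm_mul_transpose_self L) hφ (v := L.col i) h₁
    (by simpa only [inv_mul_transpose_mulVec_dotProduct_col hL] using h₂)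
    (by simpa only [hcol] using integrable_finsetSum _ fun j _ => (h₃ j).const_mul (L j i))
  simp only [inv_mul_transpose_mulVec_dotProduct_col hL, hcol] at hstein
  rw [hstein, integral_finsetSum _ fun j _ => (h₃ j).const_mul (L j i)]
  simp [mulVec, dotProduct, integral_const_mul]

theorem integral_gaussPi_cholesky_coord_eq_zero (hL : IsUnit L.det) (i : Fin N) :
    ∫ x, (L⁻¹ *ᵥ (x - μ)) i ∂gaussPi N μ (L * Lᵀ) = 0 := by
  have := isFiniteMeasure_gaussPi_mul_transpose (μ := μ) hL
  simpa [← Pi.zero_def] using integral_gaussPi_cholesky_coord_mul (μ := μ) hL (φ := fun _ => 1)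
    (differentiable_const 1) (integrable_const 1)
    (by simpa using integrable_gaussPi_cholesky_coord hL i) (fun _ => by simp)

end Cholesky

theorem bip_gOne_mul_exp_neg {N : ℕ} {μ : Fin N → ℝ} {L : Matrix (Fin N) (Fin N) ℝ}
    {ν : Measure (Fin N → ℝ)} {c : ℝ} (hc : 0 < c) {φ : (Fin N → ℝ) → ℝ} {i : Fin N}
    (hy : Integrable (fun x => (L⁻¹ *ᵥ (x - μ)) i) ν)
    (hyφ : Integrable (fun x => (L⁻¹ *ᵥ (x - μ)) i * φ x) ν)
    (hcentered : ∫ x, (L⁻¹ *ᵥ (x - μ)) i ∂ν = 0) :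
    bip ν (gOne N μ L i) (fun x => c * exp (-(φ x))) = ∫ x, (L⁻¹ *ᵥ (x - μ)) i * φ x ∂ν := by
  have hlog : ∀ x, log (gOne N μ L i x) * log (c * exp (-(φ x)))
      = (L⁻¹ *ᵥ (x - μ)) i * φ x - log c * (L⁻¹ *ᵥ (x - μ)) i := by
    intro x
    rw [gOne, log_exp, log_mul hc.ne' (exp_ne_zero _), log_exp]
    ring
  have hlog_gOne : ∀ x, log (gOne N μ L i x) = -(L⁻¹ *ᵥ (x - μ)) i := fun x => log_exp _
  rw [bip, integral_congr_ae (ae_of_all _ hlog), integral_sub hyφ (hy.const_mul _),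
    integral_const_mul, funext hlog_gOne, integral_neg, hcentered]
  ring

/-- **First-block projection coordinates onto the indefinite-Gaussian subspace.**
For `p = c·exp (-φ)` in Bayes space with Gaussian measure `ν = N(μ, Σ)`, `Σ = LLᵀ`,
the first block of projection coordinates satisfies `α₁ = ⟨g₁, p⟩ = Lᵀ·E_ν[∂φ/∂xᵀ]`,
the Cholesky-transposed expected gradient of `φ`. -/
theorem indefGaussian_first_coordinates (N : ℕ)
    (μ : Fin N → ℝ) (L : Matrix (Fin N) (Fin N) ℝ) (hL : IsUnit L.det)
    (c : ℝ) (hc : 0 < c) (φ : (Fin N → ℝ) → ℝ) (hφ : Differentiable ℝ φ)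
    (hint₁ : Integrable φ (gaussPi N μ (L * Lᵀ)))
    (hint₂ : ∀ i, Integrable (fun x => (L⁻¹.mulVec (x - μ)) i * φ x) (gaussPi N μ (L * Lᵀ)))
    (hint₃ : ∀ j, Integrable (fun x => fderiv ℝ φ x (Pi.single j 1)) (gaussPi N μ (L * Lᵀ))) :
    ∀ i, bip (gaussPi N μ (L * Lᵀ)) (gOne N μ L i) (fun x => c * Real.exp (-(φ x))) =
      (Lᵀ.mulVec fun j => ∫ x, fderiv ℝ φ x (Pi.single j 1) ∂(gaussPi N μ (L * Lᵀ))) i := by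
  intro i
  rw [bip_gOne_mul_exp_neg hc (integrable_gaussPi_cholesky_coord hL i) (hint₂ i)
    (integral_gaussPi_cholesky_coord_eq_zero hL i)]
  exact integral_gaussPi_cholesky_coord_mul hL hφ hint₁ (hint₂ i) hint₃
end
end
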